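/- Let (V,b) be a finite-dimensional nondegenerate symmetric bilinear space over a field K of characteristic zero. The Laplacian Δ : Sym^d V → Sym^{d-2} V commutes with the action of the orthogonal Lie algebra so(V,b), where so(V,b) acts on symmetric powers by derivations. -/
import Mathlib


open MvPolynomial Matrix

/-- The Laplacian contraction operator `Δ = (1/2) Σ_{i,j} B i j ∂_i ∂_j`. -/
noncomputable def lapOp {K : Type*} [Field K] {n : ℕ} (B : Matrix (Fin n) (Fin n) K) :
    MvPolynomial (Fin n) K →ₗ[K] MvPolynomial (Fin n) K :=
  (1 / 2 : K) • ∑ i, ∑ j, B i j • ((pderiv i).toLinearMap ∘ₗ (pderiv j).toLinearMap)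

/-- The derivation action on `Sym V` of an endomorphism of `V` with matrix `A`
(so `x_j ↦ Σ_i A i j x_i`), namely `Σ_{i,j} A i j · x_i ∂_j`. -/
noncomputable def soOp {K : Type*} [Field K] {n : ℕ} (A : Matrix (Fin n) (Fin n) K) :
    MvPolynomial (Fin n) K →ₗ[K] MvPolynomial (Fin n) K :=
  ∑ i, ∑ j, A i j • (LinearMap.mulLeft K (X i) ∘ₗ (pderiv j).toLinearMap)

section aux

variable {K : Type*} [Field K] {n : ℕ}

private lemma pd_comm (i j : Fin n) (p : MvPolynomial (Fin n) K) :
    pderiv i (pderiv j p) = pderiv j (pderiv i p) := by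
  induction p using MvPolynomial.induction_on with
  | C a => simp
  | add p q hp hq => simp [hp, hq]
  | mul_X p k hp => simp [pderiv_mul, hp, Pi.single_apply, apply_ite (pderiv i), apply_ite (pderiv j), pderiv_one]; ring

/-- `∂ᵢ` as an endomorphism. -/
private noncomputable def dd (K : Type*) [Field K] {n : ℕ} (i : Fin n) :
    Module.End K (MvPolynomial (Fin n) K) := (pderiv i).toLinearMap

/-- multiplication by `Xᵢ` as an endomorphism. -/
private noncomputable def mm (K : Type*) [Field K] {n : ℕ} (i : Fin n) :
    Module.End K (MvPolynomial (Fin n) K) := LinearMap.mulLeft K (X i)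

private lemma dd_comm (i j : Fin n) : dd K i * dd K j = dd K j * dd K i :=
  LinearMap.ext fun p => pd_comm i j p

private lemma dd_mm (j i : Fin n) :
    dd K j * mm K i = mm K i * dd K j + if j = i then 1 else 0 := by
  apply LinearMap.ext; intro p
  by_cases h : j = i
  · subst h
    simp [dd, mm, Module.End.mul_apply, pderiv_mul, add_comm]
  · simp [dd, mm, Module.End.mul_apply, pderiv_mul, h, pderiv_X_of_ne (Ne.symm h)]

private lemma hddm (i j k : Fin n) :
    dd K i * dd K j * mm K k
      = mm K k * (dd K i * dd K j)
        + ((if i = k then dd K j else 0) + (if j = k then dd K i else 0)) := by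
  rw [mul_assoc, dd_mm j k, mul_add, ← mul_assoc, dd_mm i k, add_mul]
  simp only [mul_ite, ite_mul, mul_one, one_mul, mul_zero, zero_mul]
  rw [mul_assoc]
  abel

private lemma hswap (i j l : Fin n) :
    (dd K i * dd K j) * dd K l = dd K l * (dd K i * dd K j) := by
  rw [mul_assoc, dd_comm j l, ← mul_assoc, dd_comm i l, mul_assoc]

private lemma key_ij (A : Matrix (Fin n) (Fin n) K) (i j : Fin n) :
    (dd K i * dd K j) * soOp A
      = soOp A * (dd K i * dd K j)
        + ((∑ l, A i l • (dd K j * dd K l)) + (∑ l, A j l • (dd K i * dd K l))) := by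
  have hso : soOp (K := K) A = ∑ k, ∑ l, A k l • (mm K k * dd K l) := rfl
  have hterm : ∀ k l : Fin n,
      (dd K i * dd K j) * (mm K k * dd K l)
        = (mm K k * dd K l) * (dd K i * dd K j)
          + ((if i = k then dd K j * dd K l else 0)
            + (if j = k then dd K i * dd K l else 0)) := by
    intro k l
    rw [← mul_assoc, hddm, add_mul, add_mul]
    congr 1
    · rw [mul_assoc, hswap, ← mul_assoc]
    · congr 1 <;> simp [ite_mul]
  have hpull : ∀ (a : Fin n) (F : Fin n → Fin n → Module.End K (MvPolynomial (Fin n) K)),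
      (∑ k, ∑ l, if a = k then F k l else 0) = ∑ l, F a l := by
    intro a F
    have h1 : ∀ k : Fin n, (∑ l, if a = k then F k l else 0)
        = if a = k then ∑ l, F k l else 0 := by
      intro k; split_ifs <;> simp
    simp [h1]
  rw [hso, Finset.mul_sum, Finset.sum_mul]
  simp only [Finset.mul_sum, Finset.sum_mul, smul_mul_assoc, mul_smul_comm, hterm,
    smul_add, Finset.sum_add_distrib, smul_ite, smul_zero]
  rw [hpull i fun k l => A k l • (dd K j * dd K l),
    hpull j fun k l => A k l • (dd K i * dd K l)]

end aux

set_option maxHeartbeats 1600000 in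
/-- The Laplacian `Δ : Sym^d V → Sym^{d-2} V` commutes with the action of
`so(V,b)` by derivations; an endomorphism `A` lies in `so(V,b)` iff `Aᵀ B + B A = 0`. -/
theorem stmt6 {K : Type*} [Field K] [CharZero K] {n : ℕ}
    (B A : Matrix (Fin n) (Fin n) K) (hsym : ∀ i j, B i j = B j i)
    (hnd : IsUnit B.det) (hA : A.transpose * B + B * A = 0) :
    ∀ p : MvPolynomial (Fin n) K, lapOp B (soOp A p) = soOp A (lapOp B p) := by
  have hlap : lapOp (K := K) B = (1/2 : K) • ∑ i, ∑ j, B i j • (dd K i * dd K j) := rfl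
  -- antisymmetry of B * A
  have hBt : B.transpose = B := Matrix.ext fun i j => hsym j i
  have h2 : (B * A).transpose = -(B * A) := by
    rw [Matrix.transpose_mul, hBt]
    exact eq_neg_of_add_eq_zero_left hA
  have hC : ∀ i l : Fin n, (B * A) l i = -(B * A) i l := by
    intro i l
    have h3 := congrFun (congrFun h2 i) l
    simpa [Matrix.transpose_apply, Matrix.neg_apply] using h3
  -- the antisymmetric contraction vanishes
  have hS : (∑ i, ∑ l, (B * A) i l • (dd K i * dd K l)) = 0 := by
    set S := ∑ i, ∑ l, (B * A) i l • (dd K i * dd K l) with hSdef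
    have h3 : S = -S := by
      calc S = ∑ l, ∑ i, (B * A) i l • (dd K i * dd K l) := Finset.sum_comm
        _ = ∑ l, ∑ i, -((B * A) l i • (dd K l * dd K i)) := by
            refine Finset.sum_congr rfl fun l _ => Finset.sum_congr rfl fun i _ => ?_
            rw [hC l i, dd_comm i l]; module
        _ = -S := by rw [hSdef]; simp
    have h4 : (2 : K) • S = 0 := by
      rw [two_smul]
      nth_rewrite 1 [h3]
      simp
    have h7 := congrArg (fun x : Module.End K (MvPolynomial (Fin n) K) => ((2:K)⁻¹) • x) h4
    simpa [smul_smul, inv_mul_cancel₀ (two_ne_zero (α := K))] using h7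
  -- reduction of the double sums
  have hT3 : (∑ i, ∑ j, B i j • ∑ l, A j l • (dd K i * dd K l))
      = ∑ i, ∑ l, (B * A) i l • (dd K i * dd K l) := by
    refine Finset.sum_congr rfl fun i _ => ?_
    calc ∑ j, B i j • ∑ l, A j l • (dd K i * dd K l)
        = ∑ j, ∑ l, (B i j * A j l) • (dd K i * dd K l) := by
          refine Finset.sum_congr rfl fun j _ => ?_
          rw [Finset.smul_sum]
          exact Finset.sum_congr rfl fun l _ => (smul_smul _ _ _)
      _ = ∑ l, ∑ j, (B i j * A j l) • (dd K i * dd K l) := Finset.sum_comm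
      _ = ∑ l, (∑ j, B i j * A j l) • (dd K i * dd K l) := by
          exact Finset.sum_congr rfl fun l _ => (Finset.sum_smul).symm
      _ = ∑ l, (B * A) i l • (dd K i * dd K l) := by
          exact Finset.sum_congr rfl fun l _ => by rw [Matrix.mul_apply]
  have hT2 : (∑ i, ∑ j, B i j • ∑ l, A i l • (dd K j * dd K l))
      = ∑ j, ∑ l, (B * A) j l • (dd K j * dd K l) := by
    rw [Finset.sum_comm]
    refine Finset.sum_congr rfl fun j _ => ?_
    calc ∑ i, B i j • ∑ l, A i l • (dd K j * dd K l)
        = ∑ i, ∑ l, (B j i * A i l) • (dd K j * dd K l) := by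
          refine Finset.sum_congr rfl fun i _ => ?_
          rw [Finset.smul_sum]
          refine Finset.sum_congr rfl fun l _ => ?_
          rw [smul_smul, hsym i j]
      _ = ∑ l, ∑ i, (B j i * A i l) • (dd K j * dd K l) := Finset.sum_comm
      _ = ∑ l, (∑ i, B j i * A i l) • (dd K j * dd K l) := by
          exact Finset.sum_congr rfl fun l _ => (Finset.sum_smul).symm
      _ = ∑ l, (B * A) j l • (dd K j * dd K l) := by
          exact Finset.sum_congr rfl fun l _ => by rw [Matrix.mul_apply]
  have key : lapOp B * soOp A = soOp A * lapOp B := by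
    rw [hlap, smul_mul_assoc, mul_smul_comm]
    congr 1
    simp only [Finset.sum_mul, Finset.mul_sum, smul_mul_assoc, mul_smul_comm]
    simp only [key_ij A, smul_add, Finset.sum_add_distrib]
    rw [hT2, hT3, hS, add_zero, add_zero]
  intro p
  have hk := DFunLike.congr_fun key p
  rw [Module.End.mul_apply, Module.End.mul_apply] at hk
  exact hk
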